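/- Let M be a 3-connected matroid with r(M) ≥ 4 and r*(M) ≥ 4, and let N be a 3-connected minor of M with at most three elements. Then every elastic element of M is N-elastic. -/

import Mathlib

open Set Matroid

namespace ElasticPaper

variable {α : Type*}

/-! ### Basic operations: deletion, contraction, minors, isomorphism -/

/-- The deletion `M \ D`. -/
def del (M : Matroid α) (D : Set α) : Matroid α := M ↾ (M.E \ D)

/-- The contraction `M / C`. -/
def con (M : Matroid α) (C : Set α) : Matroid α := (del M✶ C)✶

/-- `N` is a minor of `M`. -/
def IsMinorOf (N M : Matroid α) : Prop := ∃ C D : Set α, N = del (con M C) D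

/-- Isomorphism of matroids (on a common label type). -/
def Iso (M N : Matroid α) : Prop :=
  ∃ f : α → α, Set.BijOn f M.E N.E ∧ ∀ I ⊆ M.E, (M.Indep I ↔ N.Indep (f '' I))

/-- `M` has a minor isomorphic to `N`. -/
def HasMinorIso (M N : Matroid α) : Prop := ∃ N', IsMinorOf N' M ∧ Iso N N'

/-! ### Rank and connectivity -/

/-- The rank of a set, valued in `ℕ∞`. -/
noncomputable def eRk (M : Matroid α) (X : Set α) : ℕ∞ :=
  ⨆ I ∈ {I : Set α | M.Indep I ∧ I ⊆ X}, I.encard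

/-- The rank of a matroid. -/
noncomputable def eRank (M : Matroid α) : ℕ∞ := eRk M M.E

/-- `X` is `k`-separating in `M`, i.e. `λ(X) ≤ k - 1`. -/
def KSeparating (M : Matroid α) (k : ℕ) (X : Set α) : Prop :=
  eRk M X + eRk M (M.E \ X) + 1 ≤ eRank M + (k : ℕ∞)

/-- `X` is exactly `k`-separating in `M`, i.e. `λ(X) = k - 1`. -/
def ExactlyKSeparating (M : Matroid α) (k : ℕ) (X : Set α) : Prop :=
  eRk M X + eRk M (M.E \ X) + 1 = eRank M + (k : ℕ∞)

/-- `(X, Y)` is a `k`-separation of `M`. -/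
def KSeparation (M : Matroid α) (k : ℕ) (X Y : Set α) : Prop :=
  Disjoint X Y ∧ X ∪ Y = M.E ∧ KSeparating M k X ∧
    (k : ℕ∞) ≤ X.encard ∧ (k : ℕ∞) ≤ Y.encard

/-- `M` is `n`-connected: it has no `k`-separations for `k < n`. -/
def NConnected (M : Matroid α) (n : ℕ) : Prop :=
  ∀ k X Y, k < n → ¬ KSeparation M k X Y

/-- `M` is `3`-connected. -/
abbrev ThreeConnected (M : Matroid α) : Prop := NConnected M 3

/-- `(X, Y)` is a vertical `k`-separation of `M`. -/
def VerticalKSeparation (M : Matroid α) (k : ℕ) (X Y : Set α) : Prop :=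
  KSeparation M k X Y ∧ (k : ℕ∞) ≤ eRk M X ∧ (k : ℕ∞) ≤ eRk M Y

/-- `(X, {e}, Y)` is a vertical `3`-separation of `M`. -/
def Vertical3Sep (M : Matroid α) (X : Set α) (e : α) (Y : Set α) : Prop :=
  e ∉ X ∧ e ∉ Y ∧ Disjoint X Y ∧ X ∪ {e} ∪ Y = M.E ∧
  VerticalKSeparation M 3 (X ∪ {e}) Y ∧ VerticalKSeparation M 3 X (Y ∪ {e}) ∧
  e ∈ M.closure X ∧ e ∈ M.closure Y

/-- `(X, {e}, Y)` is a cyclic `3`-separation of `M`. -/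
def Cyclic3Sep (M : Matroid α) (X : Set α) (e : α) (Y : Set α) : Prop :=
  Vertical3Sep M✶ X e Y

/-- `Y ∪ {e}` is maximal among vertical 3-separations of `M`. -/
def VertMaximal (M : Matroid α) (e : α) (Y : Set α) : Prop :=
  ∀ X' : Set α, ∀ e' : α, ∀ Y' : Set α,
    Vertical3Sep M X' e' Y' → ¬ (Y ∪ {e} ⊂ Y' ∪ {e'})

/-! ### Circuits, fans -/

/-- A circuit is a minimal dependent set. -/
def Circuit (M : Matroid α) (C : Set α) : Prop := M.Dep C ∧ ∀ D, D ⊂ C → M.Indep D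

/-- A triangle is a 3-element circuit. -/
def Triangle (M : Matroid α) (T : Set α) : Prop := Circuit M T ∧ T.encard = 3

/-- A triad is a 3-element cocircuit. -/
def Triad (M : Matroid α) (T : Set α) : Prop := Circuit M✶ T ∧ T.encard = 3

/-- `f 0, f 1, …, f (k-1)` is a fan ordering in `M`. -/
def FanOrdering (M : Matroid α) (k : ℕ) (f : ℕ → α) : Prop :=
  3 ≤ k ∧ Set.InjOn f (Set.Iio k) ∧ (∀ i < k, f i ∈ M.E) ∧
  (∀ i, i + 2 < k →
    (Triangle M {f i, f (i+1), f (i+2)} ∨ Triad M {f i, f (i+1), f (i+2)})) ∧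
  (∀ i, i + 3 < k →
    (Triangle M {f i, f (i+1), f (i+2)} → Triad M {f (i+1), f (i+2), f (i+3)}) ∧
    (Triad M {f i, f (i+1), f (i+2)} → Triangle M {f (i+1), f (i+2), f (i+3)}))

/-- `F` is a fan of `M`. -/
def IsFan (M : Matroid α) (F : Set α) : Prop :=
  ∃ k f, FanOrdering M k f ∧ F = f '' (Set.Iio k)

/-- `M` has no 4-element fans. -/
def NoFourElementFan (M : Matroid α) : Prop := ¬ ∃ F, IsFan M F ∧ F.encard = 4

/-- A convenient ordering function for a 4-element fan. -/
def quad (a b c d : α) : ℕ → α :=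
  fun i => if i = 0 then a else if i = 1 then b else if i = 2 then c else d

/-! ### Simplification and cosimplification -/

/-- `e` is a nonloop of `M`. -/
def Nonloop (M : Matroid α) (e : α) : Prop := M.Indep {e}

/-- `S` is a simplification of `M`: the restriction of `M` to a transversal of the
parallel classes of `M`. -/
def IsSimplificationOf (S M : Matroid α) : Prop :=
  ∃ X : Set α, (∀ x ∈ X, Nonloop M x) ∧
    (∀ e, Nonloop M e → ∃! x, x ∈ X ∧ M.closure {x} = M.closure {e}) ∧
    S = M ↾ X

/-- `S` is a cosimplification of `M`. -/
def IsCosimplificationOf (S M : Matroid α) : Prop := IsSimplificationOf S✶ M✶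

/-- `si M` is 3-connected. -/
def SiConn3 (M : Matroid α) : Prop := ∀ S, IsSimplificationOf S M → ThreeConnected S

/-- `co M` is 3-connected. -/
def CoConn3 (M : Matroid α) : Prop := ∀ S, IsCosimplificationOf S M → ThreeConnected S

/-- `si M` has an `N`-minor. -/
def SiHasMinor (M N : Matroid α) : Prop := ∀ S, IsSimplificationOf S M → HasMinorIso S N

/-- `co M` has an `N`-minor. -/
def CoHasMinor (M N : Matroid α) : Prop := ∀ S, IsCosimplificationOf S M → HasMinorIso S N

/-! ### Elastic, N-elastic, N-revealing elements -/

/-- `e` is an elastic element of `M`. -/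
def Elastic (M : Matroid α) (e : α) : Prop :=
  e ∈ M.E ∧ SiConn3 (con M {e}) ∧ CoConn3 (del M {e})

/-- `e` is an `N`-elastic element of `M`. -/
def NElastic (M N : Matroid α) (e : α) : Prop :=
  Elastic M e ∧ SiHasMinor (con M {e}) N ∧ CoHasMinor (del M {e}) N

/-- `e` is an `N`-revealing element of `M`. -/
def NRevealing (M N : Matroid α) (e : α) : Prop :=
  e ∈ M.E ∧
    ((SiHasMinor (con M {e}) N ∧ ¬ SiConn3 (con M {e})) ∨
     (CoHasMinor (del M {e}) N ∧ ¬ CoConn3 (del M {e})))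

/-! ### Theta matroids and Theta-separators -/

/-- `M` is (isomorphic to) `Θ_n` or `Θ_n⁻`, with segment elements `W` and cosegment
elements `Z` (so `n = |Z|`). This is expressed by listing the circuits. -/
def ThetaParts (M : Matroid α) (W Z : Set α) : Prop :=
  M.E = W ∪ Z ∧ Disjoint W Z ∧ W.Finite ∧ Z.Finite ∧
  (W.ncard = Z.ncard ∨ W.ncard + 1 = Z.ncard) ∧
  ∃ f : α → α, Set.InjOn f W ∧ f '' W ⊆ Z ∧
    ∀ C, Circuit M C ↔
      ((C ⊆ W ∧ C.encard = 3) ∨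
       (∃ w ∈ W, C = insert w (Z \ {f w})) ∨
       (∃ w ∈ W, ∃ w' ∈ W, ∃ z ∈ Z, w ≠ w' ∧ z ≠ f w ∧ z ≠ f w' ∧
         C = insert w (insert w' (Z \ {z}))))

/-- `W ∪ Z` is a Θ-separator of `M`, where `W` is a rank-2 subset and `Z` a corank-2
subset of `E(M)`. -/
def ThetaSeparatorParts (M : Matroid α) (W Z : Set α) : Prop :=
  W ⊆ M.E ∧ Z ⊆ M.E ∧ 4 ≤ eRank M ∧ 4 ≤ eRank M✶ ∧
  eRk M W = 2 ∧ eRk M✶ Z = 2 ∧ 3 ≤ max W.ncard Z.ncard ∧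
  (ThetaParts (M ↾ (W ∪ Z)) W Z ∨ ThetaParts (M✶ ↾ (W ∪ Z)) Z W)

/-- `S` is a Θ-separator of `M`. -/
def ThetaSeparator (M : Matroid α) (S : Set α) : Prop :=
  ∃ W Z : Set α, S = W ∪ Z ∧ ThetaSeparatorParts M W Z

/-- `S` is a Θ-separator of `M` revealing the minor `N`. -/
def ThetaSeparatorRevealing (M N : Matroid α) (S : Set α) : Prop :=
  ∃ W Z : Set α, S = W ∪ Z ∧ W ⊆ M.E ∧ Z ⊆ M.E ∧ 4 ≤ eRank M ∧ 4 ≤ eRank M✶ ∧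
    eRk M W = 2 ∧ eRk M✶ Z = 2 ∧ 3 ≤ max W.ncard Z.ncard ∧
    ((ThetaParts (M ↾ (W ∪ Z)) W Z ∧ ∃ z ∈ Z, NRevealing M N z) ∨
     (ThetaParts (M✶ ↾ (W ∪ Z)) Z W ∧ ∃ w ∈ W, NRevealing M✶ N✶ w))

/-! ### Paths of 3-separations, path-width, sequential separations -/

/-- `M` has path-width three. -/
def PathWidthThree (M : Matroid α) : Prop :=
  ∃ (k : ℕ) (f : ℕ → α), Set.InjOn f (Set.Iio k) ∧ f '' (Set.Iio k) = M.E ∧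
    ∀ i ≤ k, KSeparating M 3 (f '' Set.Iio i)

/-- `(X, Y)` is a sequential 3-separation of `M`. -/
def SequentialThreeSeparation (M : Matroid α) (X Y : Set α) : Prop :=
  Disjoint X Y ∧ X ∪ Y = M.E ∧ ExactlyKSeparating M 3 X ∧
  ∃ U, (U = X ∨ U = Y) ∧ ∃ (k : ℕ) (f : ℕ → α), Set.InjOn f (Set.Iio k) ∧
    f '' (Set.Iio k) = U ∧ ∀ i ≤ k, KSeparating M 3 (f '' Set.Iio i)

/-! ### Flowers and M(K₄) -/

/-- `(P₁, P₂, P₃, P₄)` is a swirl-like flower of `M` with four petals. -/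
def SwirlLikeFlower4 (M : Matroid α) (P₁ P₂ P₃ P₄ : Set α) : Prop :=
  Disjoint P₁ P₂ ∧ Disjoint P₁ P₃ ∧ Disjoint P₁ P₄ ∧
  Disjoint P₂ P₃ ∧ Disjoint P₂ P₄ ∧ Disjoint P₃ P₄ ∧
  P₁ ∪ P₂ ∪ P₃ ∪ P₄ = M.E ∧
  2 ≤ P₁.encard ∧ 2 ≤ P₂.encard ∧ 2 ≤ P₃.encard ∧ 2 ≤ P₄.encard ∧
  KSeparating M 3 P₁ ∧ KSeparating M 3 P₂ ∧ KSeparating M 3 P₃ ∧ KSeparating M 3 P₄ ∧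
  KSeparating M 3 (P₁ ∪ P₂) ∧ KSeparating M 3 (P₂ ∪ P₃) ∧
  KSeparating M 3 (P₃ ∪ P₄) ∧ KSeparating M 3 (P₄ ∪ P₁) ∧
  eRk M P₁ + eRk M P₂ = eRk M (P₁ ∪ P₂) + 1 ∧
  eRk M P₂ + eRk M P₃ = eRk M (P₂ ∪ P₃) + 1 ∧
  eRk M P₃ + eRk M P₄ = eRk M (P₃ ∪ P₄) + 1 ∧
  eRk M P₄ + eRk M P₁ = eRk M (P₄ ∪ P₁) + 1 ∧
  eRk M P₁ + eRk M P₃ = eRk M (P₁ ∪ P₃) ∧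
  eRk M P₂ + eRk M P₄ = eRk M (P₂ ∪ P₄)

/-- `Q` is isomorphic to the cycle matroid `M(K₄)`. -/
def IsMK4 (Q : Matroid α) : Prop :=
  ∃ p q r s t u : α, ([p, q, r, s, t, u] : List α).Nodup ∧
    Q.E = {p, q, r, s, t, u} ∧
    ∀ C, Circuit Q C ↔
      C ∈ ({{p, q, s}, {p, r, t}, {q, r, u}, {s, t, u},
            {p, s, u, r}, {p, t, u, q}, {q, s, t, r}} : Set (Set α))

/-- `N` is isomorphic to the uniform matroid `U_{r,n}`. -/
def IsUnif (N : Matroid α) (r n : ℕ) : Prop :=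
  N.E.encard = (n : ℕ∞) ∧ ∀ I, N.Indep I ↔ I ⊆ N.E ∧ I.encard ≤ (r : ℕ∞)

/-! ### Fixed-basis notions -/

/-- `e` is removable with respect to the basis `B`. -/
def RemovableWrt (M : Matroid α) (B : Set α) (e : α) : Prop :=
  (e ∈ B ∧ SiConn3 (con M {e})) ∨ (e ∈ M.E \ B ∧ CoConn3 (del M {e}))

/-- `e` is `(N, B)`-robust. -/
def NBRobust (M N : Matroid α) (B : Set α) (e : α) : Prop :=
  (e ∈ B ∧ HasMinorIso (con M {e}) N) ∨ (e ∈ M.E \ B ∧ HasMinorIso (del M {e}) N)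

/-- `e` is `(N, B)`-strong. -/
def NBStrong (M N : Matroid α) (B : Set α) (e : α) : Prop :=
  (e ∈ B ∧ SiConn3 (con M {e}) ∧ SiHasMinor (con M {e}) N) ∨
  (e ∈ M.E \ B ∧ CoConn3 (del M {e}) ∧ CoHasMinor (del M {e}) N)

/-!
Up to isomorphism, the 3-connected matroids on at most three elements are `U_{0,0}`, `U_{0,1}`,
`U_{1,1}`, `U_{1,2}`, `U_{1,3}` and `U_{2,3}`. Contracting `e` lowers the rank by at most one, so
`si(M / e)` is a 3-connected matroid of rank at least three; its ground set is then dependent, so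
it has at least four elements, and hence all its circuits and cocircuits have at least three
elements. Contracting all but `k + 1` elements of a circuit leaves `U_{k,k+1}`, and dually a
cocircuit gives `U_{1,k+1}`; this produces every matroid of the list as a minor. The same argument
applies to `co(M \ e)` through duality, now using `r*(M) ≥ 4`.
-/

end ElasticPaper

namespace Matroid

variable {α : Type*} {M N : Matroid α}

lemma eRank_le_eRank_contract_add_encard (M : Matroid α) (C : Set α) :
    M.eRank ≤ (M ／ C).eRank + C.encard := by
  obtain ⟨I, hI⟩ := M.exists_isBasis' C
  obtain ⟨B, hB, hIB⟩ := hI.indep.exists_isBase_superset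
  have hBC : (M ／ C).Indep (B \ C) := by
    rw [hI.contract_indep_iff]
    exact ⟨hB.indep.subset (union_subset sdiff_subset hIB), disjoint_sdiff_left.symm⟩
  calc M.eRank = B.encard := hB.encard_eq_eRank.symm
    _ ≤ (B \ C).encard + C.encard := encard_le_encard_sdiff_add_encard _ _
    _ ≤ (M ／ C).eRank + C.encard := by gcongr; exact hBC.encard_le_eRank

lemma IsMinor.dual (h : N ≤m M) : N✶ ≤m M✶ := by
  obtain ⟨C, D, rfl⟩ := h
  exact ⟨D \ C, C, by rw [dual_contract_delete, delete_contract_comm']⟩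

end Matroid

namespace ElasticPaper

variable {α : Type*} {M K N S : Matroid α} {C X : Set α} {e : α} {k r n : ℕ}

lemma eRk_eq_eRk (M : Matroid α) (X : Set α) : eRk M X = M.eRk X := by
  refine le_antisymm (iSup₂_le fun I hI => hI.1.encard_le_eRk_of_subset hI.2) ?_
  obtain ⟨I, hI⟩ := M.exists_isBasis' X
  rw [← hI.encard_eq_eRk]
  exact le_biSup (fun I => I.encard) (show I ∈ {I | M.Indep I ∧ I ⊆ X} from ⟨hI.indep, hI.subset⟩)

lemma eRank_eq_eRank (M : Matroid α) : eRank M = M.eRank := by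
  rw [eRank, eRk_eq_eRk, eRk_ground]

lemma kSeparating_iff :
    KSeparating M k X ↔ M.eRk X + M.eRk (M.E \ X) + 1 ≤ M.eRank + k := by
  rw [KSeparating, eRk_eq_eRk, eRk_eq_eRk, eRank_eq_eRank]

lemma isMinorOf_iff : IsMinorOf N M ↔ N ≤m M := Iff.rfl

lemma kSeparating_of_eRk_lt (h : M.eRk X < k) : KSeparating M k X := by
  rw [kSeparating_iff, add_right_comm, add_comm M.eRank]
  exact add_le_add (Order.add_one_le_of_lt h) (M.eRk_le_eRank _)

lemma kSeparating_dual_iff [M.Finite] (hX : X ⊆ M.E) :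
    KSeparating M✶ k X ↔ KSeparating M k X := by
  have hX' := M.eRk_dual_add_eRank X
  have hXc := M.eRk_dual_add_eRank (M.E \ X)
  rw [sdiff_sdiff_cancel_left hX] at hXc
  have hrank := M.eRank_add_eRank_dual
  have hcard := encard_sdiff_add_encard_of_subset hX
  rw [kSeparating_iff, kSeparating_iff, dual_ground]
  have hfin : ∀ Y, M.eRk Y ≠ ⊤ := fun Y => (M.isRkFinite_set Y).eRk_lt_top.ne
  have hfin' : ∀ Y, M✶.eRk Y ≠ ⊤ := fun Y => (M✶.isRkFinite_set Y).eRk_lt_top.ne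
  have hr : M.eRank ≠ ⊤ := by rw [← eRk_ground]; exact hfin _
  have hr' : M✶.eRank ≠ ⊤ := by rw [← eRk_ground]; exact hfin' _
  have hE := M.ground_finite
  lift M.eRk X to ℕ using hfin X with a
  lift M.eRk (M.E \ X) to ℕ using hfin _ with b
  lift M✶.eRk X to ℕ using hfin' X with a'
  lift M✶.eRk (M.E \ X) to ℕ using hfin' _ with b'
  lift M.eRank to ℕ using hr with r
  lift M✶.eRank to ℕ using hr' with r'
  lift X.encard to ℕ using (hE.subset hX).encard_lt_top.ne with x
  lift (M.E \ X).encard to ℕ using (hE.subset sdiff_subset).encard_lt_top.ne with y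
  lift M.E.encard to ℕ using hE.encard_lt_top.ne with m
  norm_cast at *
  omega

lemma ThreeConnected.not_kSeparating (hM : ThreeConnected M) (hk : k < 3) (hX : X ⊆ M.E)
    (hXk : k ≤ X.encard) (hXck : k ≤ (M.E \ X).encard) : ¬ KSeparating M k X :=
  fun h => hM k X (M.E \ X) hk ⟨disjoint_sdiff_right, union_sdiff_cancel hX, h, hXk, hXck⟩

lemma ThreeConnected.dual [M.Finite] (hM : ThreeConnected M) : ThreeConnected M✶ :=
  fun k X Y hk ⟨hXY, hE, hsep, hX, hY⟩ =>
    hM k X Y hk ⟨hXY, hE, (kSeparating_dual_iff (hE ▸ subset_union_left)).1 hsep, hX, hY⟩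

/-- Small circuits are 1- or 2-separating, since `r(C) < |C|`. -/
lemma ThreeConnected.three_le_encard_of_isCircuit (hM : ThreeConnected M) (hC : M.IsCircuit C)
    (hCE : C.encard + C.encard ≤ M.E.encard) : 3 ≤ C.encard := by
  by_contra! h3
  have hfin : C.Finite := finite_of_encard_le_coe h3.le
  have hCc : C.encard ≤ (M.E \ C).encard := by
    rw [← encard_sdiff_add_encard_of_subset hC.subset_ground] at hCE
    exact (ENat.add_le_add_iff_right hfin.encard_lt_top.ne).1 hCE
  rw [← hfin.cast_ncard_eq] at h3 hCc
  refine hM.not_kSeparating (by exact_mod_cast h3) hC.subset_ground hfin.cast_ncard_eq.le hCc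
    (kSeparating_of_eRk_lt ?_)
  rw [hfin.cast_ncard_eq]
  exact M.eRk_lt_encard_of_dep_of_finite hfin hC.dep

lemma ThreeConnected.loopless (hM : ThreeConnected M) (h2 : 2 ≤ M.E.encard) : M.Loopless := by
  refine loopless_iff_forall_isNonloop.2 fun e he => by_contra fun hnl => ?_
  have hC : M.IsCircuit {e} := singleton_isCircuit.2 ((not_isNonloop_iff he).1 hnl)
  have := hM.three_le_encard_of_isCircuit hC (by simpa [one_add_one_eq_two] using h2)
  simp at this

lemma ThreeConnected.dep_ground (hM : ThreeConnected M) (h2 : 2 ≤ M.E.encard) : M.Dep M.E := by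
  by_contra hE
  rw [not_dep_iff] at hE
  obtain ⟨e, he⟩ := one_le_encard_iff_nonempty.1 ((by norm_num : (1 : ℕ∞) ≤ 2).trans h2)
  obtain ⟨f, hf, hfe⟩ := exists_ne_of_one_lt_encard ((by norm_num : (1 : ℕ∞) < 2).trans_le h2) e
  refine hM.not_kSeparating (k := 1) (X := {e}) (by norm_num) (by simpa) (by simp)
    (by simpa using one_le_encard_iff_nonempty.2 (⟨f, hf, hfe⟩ : (M.E \ {e}).Nonempty)) ?_
  rw [kSeparating_iff, (hE.subset (singleton_subset_iff.2 he)).eRk_eq_encard,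
    (hE.subset sdiff_subset).eRk_eq_encard, encard_singleton, add_comm 1,
    encard_sdiff_singleton_add_one he, ← hE.eRk_eq_encard, eRk_ground, Nat.cast_one]

lemma ThreeConnected.four_le_encard_of_three_le_eRank (hM : ThreeConnected M)
    (hr : 3 ≤ M.eRank) : 4 ≤ M.E.encard := by
  by_contra! h4
  have h3 : M.E.encard ≤ 3 := Order.le_of_lt_add_one h4
  have hE : M.E.Finite := finite_of_encard_le_coe h3
  have hind : M.Indep M.E :=
    (M.isRkFinite_of_finite hE).indep_of_encard_le_eRk (by rw [eRk_ground]; exact h3.trans hr)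
  exact (hM.dep_ground ((by norm_num : (2 : ℕ∞) ≤ 3).trans
    (hr.trans M.eRank_le_encard_ground))).not_indep hind

lemma ThreeConnected.exists_isCircuit_three_le_encard (hM : ThreeConnected M)
    (h4 : 4 ≤ M.E.encard) : ∃ C, M.IsCircuit C ∧ 3 ≤ C.encard := by
  obtain ⟨C, -, hC⟩ :=
    (hM.dep_ground ((by norm_num : (2 : ℕ∞) ≤ 4).trans h4)).exists_isCircuit_subset
  refine ⟨C, hC, by_contra fun h3 => h3 (hM.three_le_encard_of_isCircuit hC ?_)⟩
  have hC2 : C.encard ≤ 2 := Order.le_of_lt_add_one (not_le.1 h3)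
  exact (add_le_add hC2 hC2).trans (le_of_eq_of_le (by norm_num) h4)

lemma isUnif_of_eRank_le (hr : M.eRank ≤ r) (hI : ∀ I ⊆ M.E, I.encard ≤ r → M.Indep I)
    (hn : M.E.encard = n) : IsUnif M r n :=
  ⟨hn, fun I => ⟨fun h => ⟨h.subset_ground, h.encard_le_eRank.trans hr⟩, fun h => hI I h.1 h.2⟩⟩

lemma isUnif_zero_of_eRank_eq_zero (hr : M.eRank = 0) (hn : M.E.encard = n) : IsUnif M 0 n :=
  isUnif_of_eRank_le (by simp [hr]) (fun I _ hI => by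
    rw [Nat.cast_zero, nonpos_iff_eq_zero, encard_eq_zero] at hI
    exact hI ▸ M.empty_indep) hn

lemma isUnif_one_of_eRank_le_one [M.Loopless] (hr : M.eRank ≤ 1) (hn : M.E.encard = n) :
    IsUnif M 1 n :=
  isUnif_of_eRank_le (by simpa using hr)
    (fun _ hIE hI => subsingleton_indep (encard_le_one_iff_subsingleton.1 (by simpa using hI)) hIE)
    hn

lemma isUnif_of_isCircuit_ground (hC : M.IsCircuit M.E) (hn : M.E.encard = n + 1) :
    IsUnif M n (n + 1) := by
  have hfin : M.E.Finite := finite_of_encard_eq_coe (k := n + 1) (by simpa using hn)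
  refine ⟨by simpa using hn, fun I => ⟨fun hI => ⟨hI.subset_ground, ?_⟩, fun ⟨hIE, hIn⟩ => ?_⟩⟩
  · have hlt := (hfin.subset hI.subset_ground).encard_lt_encard
      (hI.subset_ground.ssubset_of_ne fun h => hC.not_indep (h ▸ hI))
    rw [hn] at hlt
    exact Order.le_of_lt_add_one hlt
  · refine hC.ssubset_indep (hIE.ssubset_of_ne fun h => ?_)
    rw [h, hn] at hIn
    norm_cast at hIn
    omega

lemma IsUnif.eRank_eq (h : IsUnif M r n) (hrn : r ≤ n) : M.eRank = r := by
  obtain ⟨B, hB⟩ := M.exists_isBase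
  obtain ⟨T, hTE, hT⟩ := exists_subset_encard_eq ((Nat.cast_le.2 hrn).trans_eq h.1.symm)
  refine le_antisymm ?_ ?_
  · rw [← hB.encard_eq_eRank]
    exact ((h.2 B).1 hB.indep).2
  · rw [← hT]
    exact ((h.2 T).2 ⟨hTE, hT.le⟩).encard_le_eRank

lemma IsUnif.isBase_iff (h : IsUnif M r n) (hrn : r ≤ n) {B : Set α} :
    M.IsBase B ↔ B ⊆ M.E ∧ B.encard = r := by
  refine ⟨fun hB => ⟨hB.subset_ground, hB.encard_eq_eRank.trans (h.eRank_eq hrn)⟩,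
    fun ⟨hBE, hB⟩ => ?_⟩
  have hBi : M.Indep B := (h.2 B).2 ⟨hBE, hB.le⟩
  exact hBi.isBase_of_eRk_ge (finite_of_encard_eq_coe hB)
    (by rw [h.eRank_eq hrn, hBi.eRk_eq_encard, hB])

lemma IsUnif.dual (h : IsUnif M r n) (hrn : r ≤ n) : IsUnif M✶ (n - r) n := by
  refine ⟨h.1, fun I => ?_⟩
  rw [dual_indep_iff_exists', dual_ground]
  refine and_congr_right fun hIE => ?_
  have hE : M.E.Finite := finite_of_encard_eq_coe h.1
  have hcard := encard_sdiff_add_encard_of_subset hIE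
  rw [h.1] at hcard
  lift I.encard to ℕ using (hE.subset hIE).encard_lt_top.ne with i
  lift (M.E \ I).encard to ℕ using (hE.subset sdiff_subset).encard_lt_top.ne with d hd
  norm_cast at hcard ⊢
  constructor
  · rintro ⟨B, hB, hIB⟩
    obtain ⟨hBE, hBr⟩ := (h.isBase_iff hrn).1 hB
    have : B.encard ≤ (M.E \ I).encard := encard_mono (subset_sdiff.2 ⟨hBE, hIB.symm⟩)
    rw [hBr, ← hd] at this
    norm_cast at this
    omega
  · intro hi
    obtain ⟨B, hBI, hB⟩ := exists_subset_encard_eq (s := M.E \ I) (k := r)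
      (by rw [← hd]; exact_mod_cast (by omega : r ≤ d))
    exact ⟨B, (h.isBase_iff hrn).2 ⟨hBI.trans sdiff_subset, hB⟩,
      (subset_sdiff.1 hBI).2.symm⟩

lemma iso_of_isUnif (hM : IsUnif M r n) (hK : IsUnif K r n) : Iso M K := by
  rcases isEmpty_or_nonempty α with hα | hα
  · refine ⟨id, by simp [eq_empty_of_isEmpty], fun I _ => ?_⟩
    simp only [eq_empty_of_isEmpty I, image_empty, M.empty_indep, K.empty_indep]
  obtain ⟨f, hf⟩ :=
    (finite_of_encard_eq_coe hM.1).exists_bijOn_of_encard_eq (hM.1.trans hK.1.symm)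
  refine ⟨f, hf, fun I hI => ?_⟩
  rw [hM.2, hK.2, (hf.injOn.mono hI).encard_image]
  exact and_congr_left fun _ => ⟨fun _ => (image_mono hI).trans hf.image_eq.subset, fun _ => hI⟩

lemma isUnif_delete_ground (M : Matroid α) : IsUnif (M ＼ M.E) 0 0 :=
  isUnif_zero_of_eRank_eq_zero
    (nonpos_iff_eq_zero.1 ((M ＼ M.E).eRank_le_encard_ground.trans (by simp))) (by simp)

/-- Contracting the rest of a circuit turns any `n + 1` of its elements into a circuit. -/
lemma exists_isMinorOf_isUnif_of_isCircuit (hC : M.IsCircuit C) (hn : n + 1 ≤ C.encard) :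
    ∃ K, IsMinorOf K M ∧ IsUnif K n (n + 1) := by
  obtain ⟨T, hTC, hT⟩ := exists_subset_encard_eq hn
  have hTne : T.Nonempty := nonempty_of_encard_ne_zero (by simp [hT])
  have hTcirc := hC.contract_sdiff_isCircuit hTne hTC
  refine ⟨M ／ (C \ T) ＼ ((M ／ (C \ T)).E \ T), ⟨_, _, rfl⟩, isUnif_of_isCircuit_ground ?_ ?_⟩
  · rw [delete_compl hTcirc.subset_ground, restrict_ground_eq]
    exact hTcirc.isCircuit_restrict_of_subset subset_rfl
  · rw [delete_compl hTcirc.subset_ground, restrict_ground_eq, hT]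

lemma ThreeConnected.isUnif_of_encard_le_three (hN : ThreeConnected N) (h3 : N.E.encard ≤ 3) :
    IsUnif N 0 0 ∨ ∃ n ≤ 2, IsUnif N n (n + 1) ∨ IsUnif N 1 (n + 1) := by
  have hfin : N.E.Finite := finite_of_encard_le_coe h3
  have : N.Finite := ⟨hfin⟩
  obtain ⟨m, hm⟩ : ∃ m : ℕ, N.E.encard = m := ⟨_, hfin.cast_ncard_eq.symm⟩
  have hm3 : m ≤ 3 := by exact_mod_cast hm ▸ h3
  have hdual {k : ℕ} (h : IsUnif N✶ k m) (hk : k ≤ m) : IsUnif N (m - k) m := by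
    simpa using h.dual hk
  have hsum := N.eRank_add_eRank_dual
  rw [hm] at hsum
  lift N.eRank to ℕ using ne_top_of_le_ne_top (by simp) (le_self_add.trans_eq hsum) with r hr
  lift N✶.eRank to ℕ using ne_top_of_le_ne_top (by simp) (le_add_self.trans_eq hsum) with r' hr'
  norm_cast at hsum
  rcases Nat.lt_or_ge m 2 with hm2 | hm2
  · rcases Nat.eq_zero_or_pos r with hr0 | hr0
    · have hU := isUnif_zero_of_eRank_eq_zero (by rw [← hr, hr0]; rfl) hm
      interval_cases m
      · exact Or.inl hU
      · exact Or.inr ⟨0, by norm_num, Or.inl hU⟩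
    · have hr'0 : N✶.eRank = 0 := by rw [← hr']; exact_mod_cast (by omega : r' = 0)
      have hU := hdual (isUnif_zero_of_eRank_eq_zero hr'0 hm) (by omega)
      interval_cases m
      · omega
      · exact Or.inr ⟨0, by norm_num, Or.inr hU⟩
  · have := hN.loopless (by rw [hm]; exact_mod_cast hm2)
    have := hN.dual.loopless (by rw [dual_ground, hm]; exact_mod_cast hm2)
    obtain ⟨n, rfl⟩ : ∃ n, m = n + 1 := ⟨m - 1, by omega⟩
    refine Or.inr ⟨n, by omega, ?_⟩
    rcases le_or_gt r 1 with hr1 | hr1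
    · exact Or.inr (isUnif_one_of_eRank_le_one (by rw [← hr]; exact_mod_cast hr1) (by simpa))
    · have hr'1 : N✶.eRank ≤ 1 := by rw [← hr']; exact_mod_cast (by omega : r' ≤ 1)
      exact Or.inl (by simpa using hdual (isUnif_one_of_eRank_le_one hr'1 hm) (by omega))

lemma ThreeConnected.hasMinorIso_of_encard_le_three [S.Finite] (hS : ThreeConnected S)
    (h4 : 4 ≤ S.E.encard) (hN : ThreeConnected N) (hN3 : N.E.encard ≤ 3) : HasMinorIso S N := by
  obtain ⟨C, hC, hC3⟩ := hS.exists_isCircuit_three_le_encard h4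
  obtain ⟨D, hD, hD3⟩ := hS.dual.exists_isCircuit_three_le_encard h4
  have h3 {n : ℕ} (hn : n ≤ 2) : (n : ℕ∞) + 1 ≤ 3 := by exact_mod_cast (by omega : n + 1 ≤ 3)
  rcases hN.isUnif_of_encard_le_three hN3 with hU | ⟨n, hn, hU | hU⟩
  · refine ⟨S ＼ S.E, isMinorOf_iff.2 ?_, iso_of_isUnif hU (isUnif_delete_ground S)⟩
    simpa using S.contract_delete_isMinor ∅ S.E
  · obtain ⟨K, hKS, hK⟩ := exists_isMinorOf_isUnif_of_isCircuit hC ((h3 hn).trans hC3)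
    exact ⟨K, hKS, iso_of_isUnif hU hK⟩
  · obtain ⟨K, hKS, hK⟩ := exists_isMinorOf_isUnif_of_isCircuit hD ((h3 hn).trans hD3)
    refine ⟨K✶, isMinorOf_iff.2 (by simpa using (isMinorOf_iff.1 hKS).dual), iso_of_isUnif hU ?_⟩
    simpa using hK.dual (by omega)

lemma IsSimplificationOf.ground_subset (hS : IsSimplificationOf S M) : S.E ⊆ M.E := by
  obtain ⟨X, hX, -, rfl⟩ := hS
  exact fun x hx => singleton_subset_iff.1 (hX x hx).subset_ground

lemma IsSimplificationOf.finite [M.Finite] (hS : IsSimplificationOf S M) : S.Finite :=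
  ⟨M.ground_finite.subset hS.ground_subset⟩

lemma IsSimplificationOf.eRank_eq (hS : IsSimplificationOf S M) : S.eRank = M.eRank := by
  have hSE := hS.ground_subset
  obtain ⟨X, -, hrep, rfl⟩ := hS
  refine Spanning.eRank_restrict ((spanning_iff_ground_subset_closure hSE).2 fun f hf => ?_)
  by_cases hnl : M.Indep {f}
  · obtain ⟨x, ⟨hxX, hcl⟩, -⟩ := hrep f hnl
    exact M.closure_subset_closure (singleton_subset_iff.2 hxX) (hcl ▸ M.mem_closure_self f hf)
  · exact ((not_isNonloop_iff hf).1 (by rwa [← indep_singleton])).mem_closure X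

lemma ThreeConnected.four_le_encard_of_isSimplificationOf_contract (hS3 : ThreeConnected S)
    (hS : IsSimplificationOf S (M ／ {e})) (hr : 4 ≤ M.eRank) : 4 ≤ S.E.encard := by
  refine hS3.four_le_encard_of_three_le_eRank ?_
  have hcon := M.eRank_le_eRank_contract_add_encard {e}
  rw [encard_singleton] at hcon
  rw [hS.eRank_eq, ← ENat.add_le_add_iff_right ENat.one_ne_top]
  exact le_of_eq_of_le (by norm_num) (hr.trans hcon)

theorem statement_7_general {α : Type*} (M N : Matroid α) [M.Finite]
    (hr : 4 ≤ eRank M) (hrs : 4 ≤ eRank M✶)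
    (hN : ThreeConnected N) (hsmall : N.E.encard ≤ 3) :
    ∀ e, Elastic M e → NElastic M N e := by
  rw [eRank_eq_eRank] at hr hrs
  rintro e ⟨heE, hsi, hco⟩
  refine ⟨⟨heE, hsi, hco⟩, fun S hS => ?_, fun S hS => ?_⟩
  · change IsSimplificationOf S (M ／ {e}) at hS
    have := hS.finite
    exact (hsi S hS).hasMinorIso_of_encard_le_three
      ((hsi S hS).four_le_encard_of_isSimplificationOf_contract hS hr) hN hsmall
  · have hS' : IsSimplificationOf S✶ (M✶ ／ {e}) := by rw [← dual_delete]; exact hS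
    have : S.Finite := ⟨hS'.finite.ground_finite⟩
    exact (hco S hS).hasMinorIso_of_encard_le_three
      ((hco S hS).dual.four_le_encard_of_isSimplificationOf_contract hS' hrs) hN hsmall

/-- Lemma 3.1. -/
theorem statement_7 {α : Type*} (M N : Matroid α) [M.Finite]
    (hM : ThreeConnected M) (hr : 4 ≤ eRank M) (hrs : 4 ≤ eRank M✶)
    (hN : ThreeConnected N) (hNM : IsMinorOf N M) (hsmall : N.E.encard ≤ 3) :
    ∀ e, Elastic M e → NElastic M N e :=
  statement_7_general M N hr hrs hN hsmall

end ElasticPaper
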